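/- Let F ⊆ ℝⁿ be bounded with lower box-counting dimension equal to its Assouad dimension. Then for every θ ∈ (0,1], both the lower and upper θ-intermediate dimensions of F equal the (common) box-counting dimension of F. -/

import Mathlib

/-!
Let `t` exceed the Assouad dimension of `F`. Then any set of diameter `d` meeting `F` has its trace
on `F` covered by at most `C (2d/r)^t` balls of diameter `r < 2d`. Used once at the scale
`r = δ^(1/θ)` this bounds the upper `θ`-intermediate dimension by the Assouad dimension. Used on
every member of a `θ`-cover with small `s`-sum (diameters in `[δ^(1/θ), δ]`, `s ≤ t`) it yields a
cover by balls of the single diameter `δ^(1/θ)` with small `((1-θ)t + θs)`-sum, so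
`dim_LB F ≤ (1-θ) dim_A F + θ dim_θ F`. When `dim_LB F = dim_A F` this squeezes
`dim_LB F ≤ dim_θ F ≤ upper dim_θ F ≤ dim_A F = dim_LB F`.
-/

open Set Metric MeasureTheory ENNReal

/-- A cover of `F` witnessing the `θ`-intermediate dimension sum condition at scale `δ`:
a countable cover by sets of diameter between `δ^(1/θ)` and `δ` whose `s`-power diameter
sum is at most `ε`.  (When `θ = 0` the lower bound on diameters is vacuous, recovering
the Hausdorff dimension condition.) -/
def interCoverSum {X : Type*} [PseudoMetricSpace X]
    (θ δ s ε : ℝ) (F : Set X) : Prop :=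
  ∃ 𝒰 : Set (Set X), 𝒰.Countable ∧ F ⊆ ⋃₀ 𝒰 ∧
    (∀ U ∈ 𝒰, EMetric.diam U ≤ ENNReal.ofReal δ ∧
      (θ ≠ 0 → ENNReal.ofReal (δ ^ (1 / θ)) ≤ EMetric.diam U)) ∧
    ∑' U : 𝒰, EMetric.diam (U : Set X) ^ s ≤ ENNReal.ofReal ε

/-- The lower `θ`-intermediate dimension of `F`. -/
noncomputable def lowerInterDim {X : Type*} [PseudoMetricSpace X] (θ : ℝ) (F : Set X) : ℝ :=
  sInf {s : ℝ | 0 ≤ s ∧ ∀ ε > 0, ∀ δ₀ > 0, ∃ δ, 0 < δ ∧ δ ≤ δ₀ ∧ interCoverSum θ δ s ε F}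

/-- The upper `θ`-intermediate dimension of `F`. -/
noncomputable def upperInterDim {X : Type*} [PseudoMetricSpace X] (θ : ℝ) (F : Set X) : ℝ :=
  sInf {s : ℝ | 0 ≤ s ∧ ∀ ε > 0, ∃ δ₀ > 0, ∀ δ, 0 < δ → δ ≤ δ₀ → interCoverSum θ δ s ε F}

/-- Lower box-counting dimension: the `θ = 1` lower intermediate dimension, i.e. covers
by sets all of the same diameter. -/
noncomputable def lowerBoxDim {X : Type*} [PseudoMetricSpace X] (F : Set X) : ℝ :=
  lowerInterDim 1 F

/-- Upper box-counting dimension: the `θ = 1` upper intermediate dimension. -/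
noncomputable def upperBoxDim {X : Type*} [PseudoMetricSpace X] (F : Set X) : ℝ :=
  upperInterDim 1 F

/-- The Assouad dimension of a set `F` in a metric space. -/
noncomputable def assouadDim {X : Type*} [PseudoMetricSpace X] (F : Set X) : ℝ :=
  sInf {s : ℝ | 0 ≤ s ∧ ∃ C > 0, ∀ x ∈ F, ∀ r R : ℝ, 0 < r → r < R →
    ∃ (N : ℕ) (U : Fin N → Set X),
      (F ∩ Metric.closedBall x R ⊆ ⋃ i, U i) ∧
      (∀ i, EMetric.diam (U i) ≤ ENNReal.ofReal r) ∧
      (N : ℝ) ≤ C * (R / r) ^ s}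

section InterCover

variable {X : Type*} [PseudoMetricSpace X] {θ δ s ε : ℝ} {F : Set X}

theorem interCoverSum_iff : interCoverSum θ δ s ε F ↔
    ∃ 𝒰 : Set (Set X), 𝒰.Countable ∧ F ⊆ ⋃₀ 𝒰 ∧
      (∀ U ∈ 𝒰, ediam U ≤ ENNReal.ofReal δ ∧
        (θ ≠ 0 → ENNReal.ofReal (δ ^ (1 / θ)) ≤ ediam U)) ∧
      ∑' U : 𝒰, ediam (U : Set X) ^ s ≤ ENNReal.ofReal ε :=
  Iff.rfl

theorem interCoverSum_empty : interCoverSum θ δ s ε (∅ : Set X) :=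
  interCoverSum_iff.2 ⟨∅, countable_empty, empty_subset _, by simp, by simp⟩

theorem interCoverSum_of_cover {ι : Type*} [Countable ι] (f : ι → Set X) (hF : F ⊆ ⋃ i, f i)
    (hf : ∀ i, ediam (f i) ≤ ENNReal.ofReal δ ∧
      (θ ≠ 0 → ENNReal.ofReal (δ ^ (1 / θ)) ≤ ediam (f i)))
    (hsum : ∑' i, ediam (f i) ^ s ≤ ENNReal.ofReal ε) :
    interCoverSum θ δ s ε F := by
  refine interCoverSum_iff.2 ⟨range f, countable_range f, by rwa [sUnion_range], ?_, ?_⟩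
  · rintro _ ⟨i, rfl⟩
    exact hf i
  · exact (ENNReal.tsum_le_tsum_comp_of_surjective (f := rangeFactorization f)
      rangeFactorization_surjective fun U ↦ ediam (U : Set X) ^ s).trans hsum

theorem interCoverSum_iff_eq_empty_of_subsingleton [Subsingleton X] (hθ : θ ≠ 0) (hδ : 0 < δ) :
    interCoverSum θ δ s ε F ↔ F = ∅ := by
  refine ⟨fun hcov ↦ eq_empty_of_forall_notMem fun x hx ↦ ?_, fun hF ↦ hF ▸ interCoverSum_empty⟩
  obtain ⟨𝒰, -, hF𝒰, hdiam, -⟩ := interCoverSum_iff.1 hcov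
  obtain ⟨U, hU, -⟩ := hF𝒰 hx
  have := (hdiam U hU).2 hθ
  rw [ediam_subsingleton subsingleton_of_subsingleton] at this
  exact (Real.rpow_pos_of_pos hδ _).not_ge (ENNReal.ofReal_eq_zero.1 (nonpos_iff_eq_zero.1 this))

end InterCover

section DimSets

variable {X : Type*} [PseudoMetricSpace X]

def lowerInterDimSet (θ : ℝ) (F : Set X) : Set ℝ :=
  {s : ℝ | 0 ≤ s ∧ ∀ ε > 0, ∀ δ₀ > 0, ∃ δ, 0 < δ ∧ δ ≤ δ₀ ∧ interCoverSum θ δ s ε F}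

def upperInterDimSet (θ : ℝ) (F : Set X) : Set ℝ :=
  {s : ℝ | 0 ≤ s ∧ ∀ ε > 0, ∃ δ₀ > 0, ∀ δ, 0 < δ → δ ≤ δ₀ → interCoverSum θ δ s ε F}

theorem lowerInterDim_eq (θ : ℝ) (F : Set X) : lowerInterDim θ F = sInf (lowerInterDimSet θ F) :=
  rfl

theorem upperInterDim_eq (θ : ℝ) (F : Set X) : upperInterDim θ F = sInf (upperInterDimSet θ F) :=
  rfl

theorem upperInterDimSet_subset_lowerInterDimSet (θ : ℝ) (F : Set X) :
    upperInterDimSet θ F ⊆ lowerInterDimSet θ F := by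
  rintro s ⟨hs, hcov⟩
  refine ⟨hs, fun ε hε δ₀ hδ₀ ↦ ?_⟩
  obtain ⟨δ₁, hδ₁, hδ₁cov⟩ := hcov ε hε
  exact ⟨min δ₀ δ₁, lt_min hδ₀ hδ₁, min_le_left _ _, hδ₁cov _ (lt_min hδ₀ hδ₁) (min_le_right _ _)⟩

theorem bddBelow_lowerInterDimSet (θ : ℝ) (F : Set X) : BddBelow (lowerInterDimSet θ F) :=
  ⟨0, fun _ hs ↦ hs.1⟩

theorem bddBelow_upperInterDimSet (θ : ℝ) (F : Set X) : BddBelow (upperInterDimSet θ F) :=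
  ⟨0, fun _ hs ↦ hs.1⟩

theorem lowerInterDim_le_upperInterDim {θ : ℝ} {F : Set X}
    (h : (upperInterDimSet θ F).Nonempty) : lowerInterDim θ F ≤ upperInterDim θ F :=
  csInf_le_csInf (bddBelow_lowerInterDimSet θ F) h (upperInterDimSet_subset_lowerInterDimSet θ F)

theorem lowerInterDimSet_of_subsingleton [Subsingleton X] {θ : ℝ} (hθ : θ ≠ 0) (F : Set X) :
    lowerInterDimSet θ F = {s | 0 ≤ s ∧ F = ∅} := by
  ext s
  refine and_congr_right fun _ ↦ ⟨fun h ↦ ?_, fun hF ε hε δ₀ hδ₀ ↦ ?_⟩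
  · obtain ⟨δ, hδ, -, hcov⟩ := h 1 one_pos 1 one_pos
    exact (interCoverSum_iff_eq_empty_of_subsingleton hθ hδ).1 hcov
  · exact ⟨δ₀, hδ₀, le_rfl, (interCoverSum_iff_eq_empty_of_subsingleton hθ hδ₀).2 hF⟩

theorem upperInterDimSet_of_subsingleton [Subsingleton X] {θ : ℝ} (hθ : θ ≠ 0) (F : Set X) :
    upperInterDimSet θ F = {s | 0 ≤ s ∧ F = ∅} := by
  ext s
  refine and_congr_right fun _ ↦ ⟨fun h ↦ ?_, fun hF ε hε ↦ ⟨1, one_pos, fun δ hδ _ ↦ ?_⟩⟩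
  · obtain ⟨δ₀, hδ₀, hcov⟩ := h 1 one_pos
    exact (interCoverSum_iff_eq_empty_of_subsingleton hθ hδ₀).1 (hcov δ₀ hδ₀ le_rfl)
  · exact (interCoverSum_iff_eq_empty_of_subsingleton hθ hδ).2 hF

end DimSets

-- The exponent `(1 - θ) t + θ s` is the one for which `r ^ ((1 - θ) t + θ s) = r ^ t δ ^ (s - t)`
-- when `r = δ ^ (1 / θ)`, so the refinement loses only the constant `C 2 ^ t`.
theorem mul_rpow_interpolated_exponent_le {C d δ θ s t m : ℝ} (hC : 0 ≤ C) (hθ : 0 < θ)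
    (hδ : 0 < δ) (hd : δ ^ (1 / θ) ≤ d) (hdδ : d ≤ δ) (hst : s ≤ t)
    (hm : m ≤ C * (d / (δ ^ (1 / θ) / 2)) ^ t) :
    m * (δ ^ (1 / θ)) ^ ((1 - θ) * t + θ * s) ≤ C * 2 ^ t * d ^ s := by
  set r := δ ^ (1 / θ)
  have hr : 0 < r := by positivity
  have hd0 : 0 < d := hr.trans_le hd
  have hr_exp : r ^ ((1 - θ) * t + θ * s) = r ^ t * δ ^ (s - t) := by
    simp only [r, ← Real.rpow_mul hδ.le, ← Real.rpow_add hδ]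
    congr 1
    field_simp
    ring
  have hdδ_pow : d ^ t * δ ^ (s - t) ≤ d ^ s := by
    have : d ^ t * δ ^ (s - t) = d ^ s * (d / δ) ^ (t - s) := by
      rw [Real.div_rpow hd0.le hδ.le, Real.rpow_sub hd0, Real.rpow_sub hδ, Real.rpow_sub hδ]
      field_simp
    rw [this]
    exact mul_le_of_le_one_right (by positivity)
      (Real.rpow_le_one (by positivity) ((div_le_one hδ).2 hdδ) (sub_nonneg.2 hst))
  calc m * r ^ ((1 - θ) * t + θ * s)
      ≤ C * (d / (r / 2)) ^ t * (r ^ t * δ ^ (s - t)) := by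
        rw [hr_exp]
        gcongr
    _ = C * 2 ^ t * (d ^ t * δ ^ (s - t)) := by
        rw [div_div_eq_mul_div, Real.div_rpow (by positivity) hr.le,
          Real.mul_rpow hd0.le two_pos.le]
        field_simp
    _ ≤ C * 2 ^ t * d ^ s := by gcongr

section Assouad

variable {X : Type*} [PseudoMetricSpace X]

def IsAssouadBound (F : Set X) (t C : ℝ) : Prop :=
  ∀ x ∈ F, ∀ r R : ℝ, 0 < r → r < R →
    ∃ (N : ℕ) (U : Fin N → Set X),
      (F ∩ closedBall x R ⊆ ⋃ i, U i) ∧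
      (∀ i, ediam (U i) ≤ ENNReal.ofReal r) ∧
      (N : ℝ) ≤ C * (R / r) ^ t

def assouadDimSet (F : Set X) : Set ℝ :=
  {t : ℝ | 0 ≤ t ∧ ∃ C > 0, IsAssouadBound F t C}

variable {F : Set X} {t C : ℝ}

theorem IsAssouadBound.mono (hw : IsAssouadBound F t C) (hC : 0 ≤ C) {t' : ℝ} (ht : t ≤ t') :
    IsAssouadBound F t' C := by
  intro x hx r R hr hrR
  obtain ⟨N, U, hcov, hdiam, hN⟩ := hw x hx r R hr hrR
  refine ⟨N, U, hcov, hdiam, hN.trans ?_⟩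
  gcongr
  exact (one_le_div hr).2 hrR.le

theorem IsAssouadBound.exists_closedBall_cover (hw : IsAssouadBound F t C) {x : X} (hx : x ∈ F)
    {ρ R : ℝ} (hρ : 0 < ρ) (hρR : ρ < R) :
    ∃ (N : ℕ) (p : Fin N → X),
      F ∩ closedBall x R ⊆ ⋃ i, closedBall (p i) ρ ∧ (N : ℝ) ≤ C * (R / ρ) ^ t := by
  obtain ⟨N, U, hcov, hdiam, hN⟩ := hw x hx ρ R hρ hρR
  classical
  refine ⟨N, fun i ↦ if h : (U i).Nonempty then h.choose else x, fun y hy ↦ ?_, hN⟩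
  obtain ⟨i, hi⟩ := mem_iUnion.1 (hcov hy)
  have hne : (U i).Nonempty := ⟨y, hi⟩
  refine mem_iUnion.2 ⟨i, ?_⟩
  simp only [dif_pos hne, mem_closedBall]
  rw [dist_edist, ← ENNReal.ofReal_le_ofReal_iff hρ.le,
    ENNReal.ofReal_toReal (edist_ne_top _ _)]
  exact (edist_le_ediam_of_mem hi hne.choose_spec).trans (hdiam i)

theorem IsAssouadBound.exists_closedBall_refinement
    (hw : IsAssouadBound F t C) (hC : 0 ≤ C) {θ s δ : ℝ} (hθ : 0 < θ) (hst : s ≤ t)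
    (hδ : 0 < δ) {U : Set X} (hU : ENNReal.ofReal (δ ^ (1 / θ)) ≤ ediam U)
    (hUδ : ediam U ≤ ENNReal.ofReal δ) :
    ∃ (m : ℕ) (p : Fin m → X), F ∩ U ⊆ ⋃ i, closedBall (p i) (δ ^ (1 / θ) / 2) ∧
      (m : ℝ≥0∞) * ENNReal.ofReal (δ ^ (1 / θ)) ^ ((1 - θ) * t + θ * s) ≤
        ENNReal.ofReal (C * 2 ^ t) * ediam U ^ s := by
  rcases (F ∩ U).eq_empty_or_nonempty with h | ⟨x, hxF, hxU⟩
  · exact ⟨0, Fin.elim0, h ▸ empty_subset _, by simp⟩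
  have hr : 0 < δ ^ (1 / θ) := by positivity
  have hU_top : ediam U ≠ ⊤ := (hUδ.trans_lt ofReal_lt_top).ne
  have hdU : ediam U = ENNReal.ofReal (diam U) := (ENNReal.ofReal_toReal hU_top).symm
  rw [hdU, ENNReal.ofReal_le_ofReal_iff diam_nonneg] at hU
  rw [hdU, ENNReal.ofReal_le_ofReal_iff hδ.le] at hUδ
  obtain ⟨m, p, hcov, hm⟩ :=
    hw.exists_closedBall_cover hxF (half_pos hr) (by linarith : δ ^ (1 / θ) / 2 < diam U)
  refine ⟨m, p, fun y hy ↦ hcov ⟨hy.1, mem_closedBall.2 (dist_le_diam_of_mem' hU_top hy.2 hxU)⟩, ?_⟩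
  rw [hdU, ENNReal.ofReal_rpow_of_pos hr, ENNReal.ofReal_rpow_of_pos (hr.trans_le hU),
    ← ENNReal.ofReal_natCast, ← ENNReal.ofReal_mul m.cast_nonneg,
    ← ENNReal.ofReal_mul (by positivity)]
  exact ENNReal.ofReal_le_ofReal (mul_rpow_interpolated_exponent_le hC hθ hδ hU hUδ hst hm)

end Assouad

section NormedSpace

variable {E : Type*} [NormedAddCommGroup E] [NormedSpace ℝ E] [Nontrivial E]

theorem ediam_closedBall_eq (x : E) {r : ℝ} (hr : 0 ≤ r) :
    ediam (closedBall x r) = ENNReal.ofReal (2 * r) := by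
  rw [← diam_closedBall_eq x hr, diam, ENNReal.ofReal_toReal isBounded_closedBall.ediam_ne_top]

theorem interCoverSum_of_closedBall_cover {ι : Type*} [Countable ι] {θ δ s ε r : ℝ} {F : Set E}
    (p : ι → E) (hF : F ⊆ ⋃ i, closedBall (p i) (r / 2)) (hr : 0 ≤ r) (hrδ : r ≤ δ)
    (hδr : θ ≠ 0 → δ ^ (1 / θ) ≤ r) (hsum : ∑' _ : ι, ENNReal.ofReal r ^ s ≤ ENNReal.ofReal ε) :
    interCoverSum θ δ s ε F := by
  have hdiam (i : ι) : ediam (closedBall (p i) (r / 2)) = ENNReal.ofReal r := by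
    rw [ediam_closedBall_eq _ (by positivity), mul_div_cancel₀ r two_ne_zero]
  refine interCoverSum_of_cover _ hF (fun i ↦ ?_) (by simpa only [hdiam] using hsum)
  rw [hdiam]
  exact ⟨ENNReal.ofReal_le_ofReal hrδ, fun hθ ↦ ENNReal.ofReal_le_ofReal (hδr hθ)⟩

variable {F : Set E} {t C θ : ℝ}

theorem IsAssouadBound.mem_upperInterDimSet (hw : IsAssouadBound F t C) (hC : 0 < C)
    (hF : Bornology.IsBounded F) (hθ : θ ∈ Ioc 0 1) (ht : 0 ≤ t) {s : ℝ} (hts : t < s) :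
    s ∈ upperInterDimSet θ F := by
  refine ⟨ht.trans hts.le, fun ε hε ↦ ?_⟩
  rcases F.eq_empty_or_nonempty with rfl | ⟨x₀, hx₀⟩
  · exact ⟨1, one_pos, fun δ _ _ ↦ interCoverSum_empty⟩
  set R := diam F + 1
  set M := C * (2 * R) ^ t
  set e := (s - t) / θ
  have hR : 1 ≤ R := le_add_of_nonneg_left diam_nonneg
  have hM : 0 < M := by positivity
  have he : 0 < e := div_pos (sub_pos.2 hts) hθ.1
  refine ⟨min ((ε / M) ^ e⁻¹) 1, lt_min (by positivity) one_pos, fun δ hδ hδ₀ ↦ ?_⟩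
  set r := δ ^ (1 / θ)
  have hr : 0 < r := by positivity
  have hδ1 : δ ≤ 1 := hδ₀.trans (min_le_right _ _)
  have hrδ : r ≤ δ := by
    calc r ≤ δ ^ (1 : ℝ) := Real.rpow_le_rpow_of_exponent_ge hδ hδ1
          ((le_div_iff₀ hθ.1).2 (by linarith [hθ.2]))
      _ = δ := Real.rpow_one δ
  obtain ⟨N, p, hcov, hN⟩ :=
    hw.exists_closedBall_cover hx₀ (half_pos hr) (by linarith : r / 2 < R)
  refine interCoverSum_of_closedBall_cover p (fun y hy ↦ hcov ⟨hy, ?_⟩) hr.le hrδ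
    (fun _ ↦ le_rfl) ?_
  · rw [mem_closedBall]
    linarith [dist_le_diam_of_mem hF hy hx₀]
  have hδe : δ ^ e ≤ ε / M := by
    calc δ ^ e ≤ ((ε / M) ^ e⁻¹) ^ e := by gcongr; exact hδ₀.trans (min_le_left _ _)
      _ = ε / M := Real.rpow_inv_rpow (by positivity) he.ne'
  have hsum : N * r ^ s ≤ ε := by
    calc N * r ^ s ≤ C * (R / (r / 2)) ^ t * r ^ s := by gcongr
      _ = M * δ ^ e := by
        have hre : r ^ s / r ^ t = δ ^ e := by
          rw [← Real.rpow_sub hr]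
          simp only [r, e, ← Real.rpow_mul hδ.le]
          ring_nf
        rw [← hre, div_div_eq_mul_div, mul_comm R, Real.div_rpow (by positivity) hr.le]
        ring
      _ ≤ M * (ε / M) := by gcongr
      _ = ε := mul_div_cancel₀ ε hM.ne'
  simpa [ENNReal.ofReal_rpow_of_pos hr, ENNReal.ofReal_mul, ENNReal.ofReal_natCast] using
    ENNReal.ofReal_le_ofReal hsum

theorem upperInterDim_le_assouadDim (hF : Bornology.IsBounded F) (hθ : θ ∈ Ioc 0 1)
    (hA : (assouadDimSet F).Nonempty) : upperInterDim θ F ≤ assouadDim F :=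
  le_csInf hA fun _ ⟨ht, _, hC, hw⟩ ↦ le_of_forall_gt_imp_ge_of_dense fun _ hts ↦
    csInf_le (bddBelow_upperInterDimSet θ F)
      (IsAssouadBound.mem_upperInterDimSet hw hC hF hθ ht hts)

theorem IsAssouadBound.mem_lowerBoxDimSet (hw : IsAssouadBound F t C) (hC : 0 < C)
    (hθ : θ ∈ Ioc 0 1) {s : ℝ} (hs : s ∈ lowerInterDimSet θ F) (hst : s ≤ t) :
    (1 - θ) * t + θ * s ∈ lowerInterDimSet 1 F := by
  refine ⟨add_nonneg (mul_nonneg (sub_nonneg.2 hθ.2) (hs.1.trans hst)) (mul_nonneg hθ.1.le hs.1),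
    fun ε hε δ₁ hδ₁ ↦ ?_⟩
  set P := C * 2 ^ t
  have hP : 0 < P := by positivity
  obtain ⟨δ, hδ, hδδ₁, hcov⟩ := hs.2 (ε / P) (div_pos hε hP) (δ₁ ^ θ) (by positivity)
  obtain ⟨𝒰, h𝒰, hF𝒰, hdiam, hsum⟩ := interCoverSum_iff.1 hcov
  have : Countable 𝒰 := h𝒰.to_subtype
  choose m p hpcov hm using fun U : 𝒰 ↦
    hw.exists_closedBall_refinement hC.le hθ.1 hst hδ ((hdiam U U.2).2 hθ.1.ne') (hdiam U U.2).1
  have hr : 0 < δ ^ (1 / θ) := by positivity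
  refine ⟨δ ^ (1 / θ), hr, ?_, interCoverSum_of_closedBall_cover
    (fun σ : Σ U : 𝒰, Fin (m U) ↦ p σ.1 σ.2) (fun y hy ↦ ?_) hr.le le_rfl (fun _ ↦ by simp) ?_⟩
  · calc δ ^ (1 / θ) ≤ (δ₁ ^ θ) ^ (1 / θ) :=
          Real.rpow_le_rpow hδ.le hδδ₁ (one_div_nonneg.2 hθ.1.le)
      _ = δ₁ := by rw [← Real.rpow_mul hδ₁.le, mul_one_div_cancel hθ.1.ne', Real.rpow_one]
  · obtain ⟨U, hU, hyU⟩ := hF𝒰 hy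
    obtain ⟨i, hi⟩ := mem_iUnion.1 (hpcov ⟨U, hU⟩ ⟨hy, hyU⟩)
    exact mem_iUnion.2 ⟨⟨⟨U, hU⟩, i⟩, hi⟩
  · calc ∑' _ : (Σ U : 𝒰, Fin (m U)), ENNReal.ofReal (δ ^ (1 / θ)) ^ ((1 - θ) * t + θ * s)
        = ∑' U : 𝒰, (m U : ℝ≥0∞) * ENNReal.ofReal (δ ^ (1 / θ)) ^ ((1 - θ) * t + θ * s) := by
          rw [ENNReal.tsum_sigma']
          simp
      _ ≤ ∑' U : 𝒰, ENNReal.ofReal P * ediam (U : Set E) ^ s := ENNReal.tsum_le_tsum hm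
      _ = ENNReal.ofReal P * ∑' U : 𝒰, ediam (U : Set E) ^ s := ENNReal.tsum_mul_left
      _ ≤ ENNReal.ofReal P * ENNReal.ofReal (ε / P) := by gcongr
      _ = ENNReal.ofReal ε := by rw [← ENNReal.ofReal_mul hP.le, mul_div_cancel₀ ε hP.ne']

theorem lowerBoxDim_le_one_sub_mul_max_add_mul (hθ : θ ∈ Ioc 0 1)
    (hA : (assouadDimSet F).Nonempty) (hL : (lowerInterDimSet θ F).Nonempty) :
    lowerBoxDim F ≤ (1 - θ) * max (assouadDim F) (lowerInterDim θ F) + θ * lowerInterDim θ F := by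
  refine le_of_forall_pos_le_add fun η hη ↦ ?_
  obtain ⟨t, ⟨-, C, hC, hw⟩, htA⟩ := exists_lt_of_csInf_lt hA (lt_add_of_pos_right _ hη)
  obtain ⟨s, hs, hsL⟩ := exists_lt_of_csInf_lt hL (lt_add_of_pos_right _ hη)
  have hmax : max t s ≤ max (assouadDim F) (lowerInterDim θ F) + η :=
    max_le (htA.le.trans (by gcongr; exact le_max_left _ _))
      (hsL.le.trans (by gcongr; exact le_max_right _ _))
  have h1θ : 0 ≤ 1 - θ := sub_nonneg.2 hθ.2
  calc lowerBoxDim F ≤ (1 - θ) * max t s + θ * s :=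
        csInf_le (bddBelow_lowerInterDimSet 1 F)
          ((hw.mono hC.le (le_max_left t s)).mem_lowerBoxDimSet hC hθ hs (le_max_right t s))
    _ ≤ (1 - θ) * (max (assouadDim F) (lowerInterDim θ F) + η) +
          θ * (lowerInterDim θ F + η) :=
        add_le_add (mul_le_mul_of_nonneg_left hmax h1θ) (mul_le_mul_of_nonneg_left hsL.le hθ.1.le)
    _ = _ := by ring

end NormedSpace

theorem exists_fin_mul_le_le_succ_mul {a c : ℝ} {m : ℕ} (ha : 0 < a) (hm : 0 < m) (hc : 0 ≤ c)
    (hcm : c ≤ m * a) : ∃ k : Fin m, k * a ≤ c ∧ c ≤ (k + 1) * a := by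
  rcases hcm.lt_or_eq with hlt | rfl
  · have hca : 0 ≤ c / a := div_nonneg hc ha.le
    refine ⟨⟨⌊c / a⌋₊, (Nat.floor_lt hca).2 ((div_lt_iff₀ ha).2 hlt)⟩, ?_, ?_⟩
    · exact (le_div_iff₀ ha).1 (Nat.floor_le hca)
    · exact ((div_lt_iff₀ ha).1 (Nat.lt_floor_add_one _)).le
  · refine ⟨⟨m - 1, Nat.sub_lt hm one_pos⟩, ?_, ?_⟩ <;>
      simp only [Nat.cast_pred hm, sub_add_cancel, le_refl]
    nlinarith

theorem EuclideanSpace.dist_le_sqrt_card_mul {n : ℕ} {y z : EuclideanSpace ℝ (Fin n)} {a : ℝ}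
    (ha : 0 ≤ a) (h : ∀ i, dist (y i) (z i) ≤ a) : dist y z ≤ √n * a := by
  calc dist y z = √(∑ i, dist (y i) (z i) ^ 2) := EuclideanSpace.dist_eq y z
    _ ≤ √(n * a ^ 2) := by
        gcongr
        calc ∑ i, dist (y i) (z i) ^ 2 ≤ ∑ _i : Fin n, a ^ 2 := by
              gcongr with i
              exact h i
          _ = n * a ^ 2 := by simp
    _ = √n * a := by rw [Real.sqrt_mul n.cast_nonneg, Real.sqrt_sq ha]

theorem EuclideanSpace.isAssouadBound {n : ℕ} (F : Set (EuclideanSpace ℝ (Fin n))) :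
    IsAssouadBound F n ((2 * √n + 3) ^ n) := by
  intro x _ r R hr hrR
  set a := r / (√n + 1)
  have ha : 0 < a := by positivity
  set m := ⌈2 * R / a⌉₊
  have hR : 0 < R := hr.trans hrR
  have hm : 0 < m := Nat.ceil_pos.2 (by positivity)
  let box (g : Fin n → Fin m) : Set (EuclideanSpace ℝ (Fin n)) :=
    {y | ∀ i, x i - R + g i * a ≤ y i ∧ y i ≤ x i - R + (g i + 1) * a}
  refine ⟨m ^ n, fun k ↦ box (finFunctionFinEquiv.symm k), fun y hy ↦ ?_, fun k ↦ ?_, ?_⟩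
  · have hyx (i : Fin n) : |y i - x i| ≤ R :=
      (Real.dist_eq _ _ ▸ PiLp.dist_apply_le y x i).trans (mem_closedBall.1 hy.2)
    have h2R : 2 * R ≤ m * a := (div_le_iff₀ ha).1 (Nat.le_ceil _)
    choose g hg using fun i ↦ exists_fin_mul_le_le_succ_mul ha hm (c := y i - (x i - R))
      (by linarith [(abs_le.1 (hyx i)).1]) (by linarith [(abs_le.1 (hyx i)).2])
    refine mem_iUnion.2 ⟨finFunctionFinEquiv g, fun i ↦ ?_⟩
    simp only [Equiv.symm_apply_apply]
    constructor <;> linarith [hg i]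
  · refine ediam_le_of_forall_dist_le fun y hy z hz ↦ ?_
    calc dist y z ≤ √n * a := EuclideanSpace.dist_le_sqrt_card_mul ha.le fun i ↦ by
          rw [Real.dist_eq, abs_le]
          constructor <;> linarith [hy i, hz i]
      _ ≤ r := by
          rw [mul_div_assoc', div_le_iff₀ (by positivity)]
          nlinarith
  · have hmR : (m : ℝ) ≤ (2 * √n + 3) * (R / r) := by
      have hRr : 1 ≤ R / r := (one_le_div hr).2 hrR.le
      have : 2 * R / a = (2 * √n + 2) * (R / r) := by
        simp only [a]
        field_simp
      linarith [Nat.ceil_lt_add_one (div_nonneg (by linarith) ha.le : 0 ≤ 2 * R / a)]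
    rw [Real.rpow_natCast, ← mul_pow, Nat.cast_pow]
    gcongr

theorem stmt13 (n : ℕ) (F : Set (EuclideanSpace ℝ (Fin n)))
    (hF : Bornology.IsBounded F) (h : lowerBoxDim F = assouadDim F)
    (θ : ℝ) (hθ : θ ∈ Set.Ioc (0:ℝ) 1) :
    lowerInterDim θ F = lowerBoxDim F ∧ upperInterDim θ F = lowerBoxDim F := by
  rcases subsingleton_or_nontrivial (EuclideanSpace ℝ (Fin n)) with _ | _
  · simp only [lowerBoxDim, lowerInterDim_eq, upperInterDim_eq,
      lowerInterDimSet_of_subsingleton hθ.1.ne', upperInterDimSet_of_subsingleton hθ.1.ne',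
      lowerInterDimSet_of_subsingleton one_ne_zero, and_self]
  have hw := EuclideanSpace.isAssouadBound F
  have hC : (0 : ℝ) < (2 * √n + 3) ^ n := by positivity
  have hA : (assouadDimSet F).Nonempty := ⟨n, n.cast_nonneg, _, hC, hw⟩
  have hU : (upperInterDimSet θ F).Nonempty :=
    ⟨n + 1, hw.mem_upperInterDimSet hC hF hθ n.cast_nonneg (lt_add_one _)⟩
  have hLU := lowerInterDim_le_upperInterDim hU
  have hUA := upperInterDim_le_assouadDim hF hθ hA
  have hBL := lowerBoxDim_le_one_sub_mul_max_add_mul hθ hA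
    (hU.mono (upperInterDimSet_subset_lowerInterDimSet θ F))
  rw [max_eq_left (hLU.trans hUA), ← h] at hBL
  have hBL' : lowerBoxDim F ≤ lowerInterDim θ F := by nlinarith [hθ.1]
  exact ⟨by linarith, by linarith⟩
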